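/- Let d, r be natural numbers and let D be a Borel probability measure on ℝ^d such that for every multi-index α ∈ ℕ^d with α₁+⋯+α_d ≤ r the monomial x ↦ x₁^{α₁}⋯x_d^{α_d} is integrable with respect to D. Then there exists a Borel probability measure G on ℝ^d whose support is a finite set of cardinality at most the number of multi-indices α ∈ ℕ^d with α₁+⋯+α_d ≤ r, and such that for every multi-index α with α₁+⋯+α_d ≤ r one has ∫ x₁^{α₁}⋯x_d^{α_d} dG = ∫ x₁^{α₁}⋯x_d^{α_d} dD. -/

import Mathlib

/-!
The integral of an integrable function `f` with values in a finite-dimensional space lies in the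
convex hull of the values of `f` on any conull set. Otherwise a nonzero functional `L` attains its
maximum over that hull at the integral `m`, so `L ∘ f = L m` almost everywhere; then `f - m` takes
values in `ker L` almost everywhere, and induction on the dimension applies.

Apply this to the vector of monomials `ψ x = (x ^ α)_{|α| ≤ r}`. By Carathéodory, `∫ ψ dD` is a
convex combination `∑ wᵢ ψ(xᵢ)` with the `ψ(xᵢ)` affinely independent. They lie in the affine
hyperplane where the coordinate `α = 0` equals `1`, so they are linearly independent and there
are at most as many of them as multi-indices. Then `G = ∑ wᵢ δ_{xᵢ}` has the same moments as `D`.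
-/

open MeasureTheory

/-- The support of a measure: the smallest closed set whose complement has measure zero,
realized as the intersection of all closed sets with null complement. -/
def measureSupport {X : Type*} [TopologicalSpace X] [MeasurableSpace X]
    (μ : Measure X) : Set X :=
  ⋂₀ {s : Set X | IsClosed s ∧ μ sᶜ = 0}

open Module Set

universe u

theorem AffineIndependent.linearIndependent_of_map_eq_one {k V ι : Type*} [Ring k] [AddCommGroup V]
    [Module k V] {p : ι → V} (hp : AffineIndependent k p) (ℓ : V →ₗ[k] k)
    (hℓ : ∀ i, ℓ (p i) = 1) : LinearIndependent k p := by
  rw [linearIndependent_iff']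
  intro s g hg i hi
  have hsum : ∑ i ∈ s, g i = 0 := by simpa [hℓ] using congrArg ℓ hg
  exact hp s g hsum (by rw [s.weightedVSub_eq_linear_combination hsum, hg]) i hi

theorem finite_setOf_sum_le (ι : Type*) [Fintype ι] (r : ℕ) :
    {α : ι → ℕ | ∑ i, α i ≤ r}.Finite := by
  classical
  exact (finite_Iic fun _ ↦ r).subset fun α hα i ↦
    (Finset.single_le_sum (fun j _ ↦ Nat.zero_le (α j)) (Finset.mem_univ i)).trans hα

section

variable {E : Type u} [NormedAddCommGroup E] [NormedSpace ℝ E] [FiniteDimensional ℝ E]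

theorem Convex.exists_dual_le_of_notMem {C : Set E} (hC : Convex ℝ C) (hne : C.Nonempty) {m : E}
    (hm : m ∉ C) : ∃ L : StrongDual ℝ E, L ≠ 0 ∧ ∀ y ∈ C, L y ≤ L m := by
  by_cases hint : (interior C).Nonempty
  · exact geometric_hahn_banach_of_nonempty_interior_point hC (fun h ↦ hm (interior_subset h)) hint
  obtain ⟨c, hc⟩ := hne
  have hdir : (affineSpan ℝ C).direction < ⊤ := by
    rw [lt_top_iff_ne_top, Ne,
      AffineSubspace.direction_eq_top_iff_of_nonempty ⟨c, subset_affineSpan ℝ C hc⟩,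
      ← hC.interior_nonempty_iff_affineSpan_eq_top]
    exact hint
  obtain ⟨φ, hφ0, hφ⟩ := Submodule.exists_dual_map_eq_bot_of_lt_top hdir inferInstance
  set L : StrongDual ℝ E := LinearMap.toContinuousLinearMap φ
  have hL0 : L ≠ 0 := fun h ↦ hφ0 (by ext y; exact congrArg (· y) h)
  have hconst : ∀ y ∈ C, L y = L c := by
    intro y hy
    have hyc : y -ᵥ c ∈ (affineSpan ℝ C).direction :=
      AffineSubspace.vsub_mem_direction (subset_affineSpan ℝ C hy) (subset_affineSpan ℝ C hc)
    have : φ (y - c) = 0 := by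
      simpa [hφ] using Submodule.mem_map_of_mem (f := φ) hyc
    simpa [L, sub_eq_zero] using this
  rcases le_total (L c) (L m) with h | h
  · exact ⟨L, hL0, fun y hy ↦ (hconst y hy).trans_le h⟩
  · exact ⟨-L, neg_ne_zero.2 hL0, fun y hy ↦ by simpa [hconst y hy] using h⟩

variable {X : Type*} [MeasurableSpace X] {μ : Measure X} [IsProbabilityMeasure μ]

theorem ae_eq_const_of_ae_le_of_integral_eq {g : X → ℝ} (hg : Integrable g μ) {c : ℝ}
    (hle : ∀ᵐ x ∂μ, g x ≤ c) (hint : ∫ x, g x ∂μ = c) : ∀ᵐ x ∂μ, g x = c :=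
  (integral_eq_iff_of_ae_le hg (integrable_const c) hle).1 (by simpa using hint)

theorem integral_mem_convexHull_image {f : X → E} (hf : Integrable f μ) {t : Set X}
    (ht : μ tᶜ = 0) : ∫ x, f x ∂μ ∈ convexHull ℝ (f '' t) := by
  induction hn : finrank ℝ E using Nat.strong_induction_on generalizing E t with
  | _ n ih =>
  set m := ∫ x, f x ∂μ
  by_contra hm
  have htne : t.Nonempty := nonempty_iff_ne_empty.2 (by rintro rfl; simp at ht)
  obtain ⟨L, hL0, hL⟩ := (convex_convexHull ℝ _).exists_dual_le_of_notMem
    ((htne.image f).mono (subset_convexHull ℝ _)) hm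
  set N := t ∩ {x | L (f x) = L m}
  have hN : μ Nᶜ = 0 := by
    refine mem_ae_iff.1 (Filter.inter_mem (mem_ae_iff.2 ht) ?_)
    refine ae_eq_const_of_ae_le_of_integral_eq (L.integrable_comp hf) ?_ (L.integral_comp_comm hf)
    filter_upwards [mem_ae_iff.2 ht] with x hx
    exact hL _ (subset_convexHull ℝ _ (mem_image_of_mem f hx))
  obtain ⟨P, hP⟩ := L.ker_closedComplemented_of_finiteDimensional_range
  have hK : finrank ℝ L.ker < n := hn ▸ Submodule.finrank_lt fun h ↦
    hL0 (ContinuousLinearMap.coe_injective (LinearMap.ker_eq_top.1 h))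
  set g : X → L.ker := fun x ↦ P (f x - m)
  have hfm : Integrable (fun x ↦ f x - m) μ := hf.sub (integrable_const m)
  have hg0 : ∫ x, g x ∂μ = 0 := by
    rw [P.integral_comp_comm hfm, integral_sub hf (integrable_const m)]
    simp [m]
  have hgN : ∀ x ∈ N, (g x : E) = f x - m := fun x hx ↦
    congrArg Subtype.val (hP ⟨f x - m, by simpa [sub_eq_zero] using hx.2⟩)
  have h0 := ih _ hK (P.integrable_comp hfm) hN rfl
  rw [hg0] at h0
  set A : L.ker →ᵃ[ℝ] E := L.ker.subtype.toAffineMap + AffineMap.const ℝ L.ker m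
  have hA : A '' (g '' N) = f '' N := by
    rw [image_image]
    exact image_congr fun x hx ↦ by simp [A, hgN x hx]
  have hmN : m ∈ convexHull ℝ (f '' N) := by
    rw [← hA, ← AffineMap.image_convexHull]
    exact ⟨0, h0, by simp [A]⟩
  exact hm (convexHull_mono (image_mono inter_subset_left) hmN)

theorem exists_affineIndependent_sum_smul_eq_integral {f : X → E} (hf : Integrable f μ) :
    ∃ (ι : Type u) (_ : Fintype ι) (x : ι → X) (w : ι → ℝ), AffineIndependent ℝ (f ∘ x) ∧
      (∀ i, 0 < w i) ∧ ∑ i, w i = 1 ∧ ∑ i, w i • f (x i) = ∫ x, f x ∂μ := by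
  have hmem := integral_mem_convexHull_image hf (t := univ) (by simp)
  rw [image_univ] at hmem
  obtain ⟨ι, _, z, w, hz, hind, hw0, hw1, hsum⟩ := eq_pos_convex_span_of_mem_convexHull hmem
  choose x hx using fun i ↦ hz (mem_range_self i)
  obtain rfl : f ∘ x = z := funext hx
  exact ⟨ι, _, x, w, hind, hw0, hw1, hsum⟩

end

section SumDirac

variable {X ι : Type*} [MeasurableSpace X] [Fintype ι] {x : ι → X} {w : ι → ℝ}

theorem isProbabilityMeasure_sum_dirac (hw0 : ∀ i, 0 ≤ w i) (hw1 : ∑ i, w i = 1) :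
    IsProbabilityMeasure (Measure.sum fun i ↦ ENNReal.ofReal (w i) • Measure.dirac (x i)) := by
  constructor
  rw [Measure.sum_apply _ MeasurableSet.univ, tsum_fintype]
  simp [← ENNReal.ofReal_sum_of_nonneg fun i _ ↦ hw0 i, hw1]

theorem integral_sum_dirac_ofReal [MeasurableSingletonClass X] {F : Type*} [NormedAddCommGroup F]
    [NormedSpace ℝ F] [FiniteDimensional ℝ F] (hw0 : ∀ i, 0 ≤ w i) (g : X → F) :
    ∫ y, g y ∂(Measure.sum fun i ↦ ENNReal.ofReal (w i) • Measure.dirac (x i)) =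
      ∑ i, w i • g (x i) := by
  rw [integral_sum_dirac fun _ ↦ ENNReal.ofReal_ne_top, tsum_fintype]
  simp [ENNReal.toReal_ofReal (hw0 _)]

theorem measureSupport_sum_dirac_subset [TopologicalSpace X] [T1Space X]
    [MeasurableSingletonClass X] (c : ι → ENNReal) (x : ι → X) :
    measureSupport (Measure.sum fun i ↦ c i • Measure.dirac (x i)) ⊆ range x := by
  refine sInter_subset_of_mem ⟨(finite_range x).isClosed, ?_⟩
  rw [Measure.sum_apply _ (finite_range x).measurableSet.compl]
  simp

end SumDirac

/-- For any Borel probability measure `D` on `ℝ^d` whose monomial moments up to total order `r`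
exist, there is a Borel probability measure `G` whose support is a finite set of cardinality at
most the number of multi-indices of total degree at most `r`, having the same moments as `D` up
to total order `r`. -/
theorem exists_discrete_moment_matching (d r : ℕ) (D : Measure (Fin d → ℝ))
    [IsProbabilityMeasure D]
    (hint : ∀ α : Fin d → ℕ, (∑ i, α i) ≤ r →
      Integrable (fun x : Fin d → ℝ => ∏ i, (x i) ^ (α i)) D) :
    ∃ G : Measure (Fin d → ℝ), IsProbabilityMeasure G ∧
      (measureSupport G).Finite ∧
      (measureSupport G).ncard ≤ Set.ncard {α : Fin d → ℕ | (∑ i, α i) ≤ r} ∧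
      ∀ α : Fin d → ℕ, (∑ i, α i) ≤ r →
        ∫ x, ∏ i, (x i) ^ (α i) ∂G = ∫ x, ∏ i, (x i) ^ (α i) ∂D := by
  set S := {α : Fin d → ℕ | ∑ i, α i ≤ r}
  have : Fintype S := (finite_setOf_sum_le (Fin d) r).fintype
  set ψ : (Fin d → ℝ) → S → ℝ := fun x α ↦ ∏ i, x i ^ α.1 i
  have hψ : ∀ α, Integrable (ψ · α) D := fun α ↦ hint α α.2
  obtain ⟨ι, _, x, w, hind, hw0, hw1, hsum⟩ :=
    exists_affineIndependent_sum_smul_eq_integral (integrable_pi_iff.2 hψ)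
  have hcard : Fintype.card ι ≤ Fintype.card S :=
    ((hind.linearIndependent_of_map_eq_one (LinearMap.proj ⟨0, by simp [S]⟩) fun i ↦ by
      simp [ψ]).fintype_card_le_finrank).trans_eq (finrank_fintype_fun_eq_card ℝ)
  have hsupp := measureSupport_sum_dirac_subset (fun i ↦ ENNReal.ofReal (w i)) x
  refine ⟨_, isProbabilityMeasure_sum_dirac (fun i ↦ (hw0 i).le) hw1, (finite_range x).subset hsupp,
    ?_, fun α hα ↦ ?_⟩
  · calc (measureSupport _).ncard ≤ (range x).ncard := ncard_le_ncard hsupp (finite_range x)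
      _ ≤ Fintype.card ι := Nat.card_eq_fintype_card (α := ι) ▸ Finite.card_range_le x
      _ ≤ Fintype.card S := hcard
      _ = S.ncard := by rw [← Nat.card_coe_set_eq, Nat.card_eq_fintype_card]
  · rw [integral_sum_dirac_ofReal (fun i ↦ (hw0 i).le), ← eval_integral hψ ⟨α, hα⟩, ← hsum]
    simp [ψ]
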